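/- Let D be the derivation on ℤ[a,x,y,z] with D(a)=az, D(x)=D(y)=D(z)=xy. Then for every n ≥ 0, Dⁿ(a) = a·L_n(x,y,z), where L_n(x,y,z) = Σ_{σ ∈ S_n} x^{jump(σ)} y^{des(σ)} z^{lsuc(σ)} (with σ(0)=0, jump counting i with σ(i) ≥ σ(i-1)+2, des counting 1 ≤ i ≤ n-1 with σ(i) > σ(i+1), lsuc counting i with σ(i-1)+1 = σ(i)), and L_0 = 1. -/

import Mathlib

open Finset

/-- The value `σ(i)` of a permutation of `{1,…,n}` at a one-based position `i`,
with the convention `σ(0) = 0` (and value `0` outside `[1,n]`). -/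
def pv {n : ℕ} (σ : Equiv.Perm (Fin n)) (i : ℕ) : ℕ :=
  if h : 1 ≤ i ∧ i ≤ n then ((σ ⟨i - 1, by omega⟩ : Fin n) : ℕ) + 1 else 0

/-- Number of excedances: indices `i` with `σ(i) > i`. -/
def exc {n : ℕ} (σ : Equiv.Perm (Fin n)) : ℕ :=
  ((Finset.Icc 1 n).filter (fun i => i < pv σ i)).card

/-- Number of fixed points: indices `i` with `σ(i) = i`. -/
def fixpt {n : ℕ} (σ : Equiv.Perm (Fin n)) : ℕ :=
  ((Finset.Icc 1 n).filter (fun i => pv σ i = i)).card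

/-- Number of left successions: indices `1 ≤ i ≤ n` with `σ(i-1) + 1 = σ(i)`. -/
def lsuc {n : ℕ} (σ : Equiv.Perm (Fin n)) : ℕ :=
  ((Finset.Icc 1 n).filter (fun i => pv σ (i - 1) + 1 = pv σ i)).card

/-- Number of jumps: indices `1 ≤ i ≤ n` with `σ(i) ≥ σ(i-1) + 2`. -/
def jump {n : ℕ} (σ : Equiv.Perm (Fin n)) : ℕ :=
  ((Finset.Icc 1 n).filter (fun i => pv σ (i - 1) + 2 ≤ pv σ i)).card

/-- Number of descents: indices `1 ≤ i ≤ n-1` with `σ(i) > σ(i+1)`. -/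
def des {n : ℕ} (σ : Equiv.Perm (Fin n)) : ℕ :=
  ((Finset.Icc 1 (n - 1)).filter (fun i => pv σ (i + 1) < pv σ i)).card

open MvPolynomial

/-- `L_n(x,y,z) = Σ_{σ ∈ S_n} x^{jump σ} y^{des σ} z^{lsuc σ}` with `x = X 1`, `y = X 2`,
`z = X 3` in `ℤ[a,x,y,z]` (`a = X 0`). -/
noncomputable def Lpoly (n : ℕ) : MvPolynomial (Fin 4) ℤ :=
  ∑ σ : Equiv.Perm (Fin n), X 1 ^ jump σ * X 2 ^ des σ * X 3 ^ lsuc σ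

/-!
Every `σ ∈ S_{n+1}` arises in exactly one way by inserting the value `n + 1` into some
`τ ∈ S_n` at some position `s`. Reading `τ` as the word `0 τ(1) … τ(n) 0`, the insertion replaces
the pair `(τ(s), τ(s+1))` by `(τ(s), n+1), (n+1, τ(s+1))`. Each of the `n + 1` pairs of `τ` is a
jump, a succession or a weak descent, and the value `n` is followed by a weak descent. Inserting
right after `n` multiplies the weight `x^jump y^des z^lsuc` by `z`, inserting into a jump by `y`,
into a succession by `xy/z`, into any other weak descent by `x`: these are the rules
`a → az`, `x → xy`, `z → xy`, `y → xy` of `D`. Hence `L_{n+1} = z L_n + D L_n`, and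
`D (a L_n) = a (z L_n + D L_n)` closes the induction.
-/

open Equiv

variable {n : ℕ}

section PermValues

variable (σ : Perm (Fin n))

@[simp]
lemma pv_zero : pv σ 0 = 0 := by
  simp [pv]

lemma pv_add_one {k : ℕ} (hk : k < n) : pv σ (k + 1) = σ ⟨k, hk⟩ + 1 := by
  simp [pv, Nat.succ_le_of_lt hk]

lemma pv_of_lt {k : ℕ} (hk : n < k) : pv σ k = 0 :=
  dif_neg (by omega)

lemma pv_le (k : ℕ) : pv σ k ≤ n := by
  unfold pv
  split
  · exact Fin.is_lt _
  · omega

lemma pv_add_one_ne {k : ℕ} (hk : 1 ≤ k) (hkn : k < n) : pv σ (k + 1) ≠ pv σ k := by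
  obtain ⟨i, rfl⟩ : ∃ i, k = i + 1 := ⟨k - 1, by omega⟩
  rw [pv_add_one σ hkn, pv_add_one σ (by omega)]
  intro h
  have := σ.injective (Fin.ext (by omega) : σ ⟨i + 1, hkn⟩ = σ ⟨i, by omega⟩)
  simp at this

lemma card_pv_eq_top : #{k ∈ range (n + 1) | pv σ k = n} = 1 := by
  rcases n with _ | m
  · simp [filter_singleton]
  rw [card_eq_one]
  refine ⟨σ.symm (Fin.last m) + 1, ?_⟩
  ext k
  simp only [mem_filter, mem_range, mem_singleton]
  constructor
  · rintro ⟨hk, h⟩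
    obtain _ | i := k
    · simp at h
    rw [pv_add_one σ (by omega)] at h
    have : σ ⟨i, by omega⟩ = Fin.last m := Fin.ext (by simp; omega)
    simp [← this]
  · rintro rfl
    simp [pv_add_one σ (Fin.is_lt _), Nat.lt_succ_iff.mp (Fin.is_lt _)]

end PermValues

lemma sum_Icc_one_eq_sum_range {M : Type*} [AddCommMonoid M] (f : ℕ → M) (m : ℕ) :
    ∑ i ∈ Icc 1 m, f i = ∑ k ∈ range m, f (k + 1) := by
  rw [range_eq_Ico, sum_Ico_add', ← Ico_add_one_right_eq_Icc, zero_add]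

/-- The number of consecutive letters `(a, b)` of the word `0 σ(1) … σ(n) 0` with `r a b`. -/
def pairCount (r : ℕ → ℕ → Prop) [DecidableRel r] (σ : Perm (Fin n)) : ℕ :=
  #{k ∈ range (n + 1) | r (pv σ k) (pv σ (k + 1))}

section PairCount

variable (σ : Perm (Fin n))

lemma pairCount_eq_of_not_rel_zero (r : ℕ → ℕ → Prop) [DecidableRel r] (hr : ∀ a, ¬ r a 0) :
    pairCount r σ = #{i ∈ Icc 1 n | r (pv σ (i - 1)) (pv σ i)} := by
  simp only [pairCount, card_filter, sum_range_succ, sum_Icc_one_eq_sum_range,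
    pv_of_lt σ (Nat.lt_succ_self n), if_neg (hr _), add_zero, Nat.add_sub_cancel]

lemma pairCount_jump : pairCount (fun a b => a + 2 ≤ b) σ = jump σ :=
  pairCount_eq_of_not_rel_zero σ _ (by omega)

lemma pairCount_lsuc : pairCount (fun a b => a + 1 = b) σ = lsuc σ :=
  pairCount_eq_of_not_rel_zero σ _ (by omega)

-- The extra weak descent is the final pair `(σ(n), 0)`, or `(0, 0)` when `n = 0`.
lemma pairCount_weakDescent : pairCount (fun a b => b ≤ a) σ = des σ + 1 := by
  rcases n with _ | m
  · simp [pairCount, des, filter_singleton, pv_of_lt σ Nat.one_pos]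
  have hstrict : ∀ k ∈ range m, pv σ (k + 2) ≤ pv σ (k + 1) ↔ pv σ (k + 2) < pv σ (k + 1) :=
    fun k hk => (pv_add_one_ne σ (by omega) (by have := mem_range.mp hk; omega)).le_iff_lt
  simp only [pairCount, des, card_filter, sum_range_succ' _ (m + 1), sum_range_succ _ m,
    sum_Icc_one_eq_sum_range, Nat.add_sub_cancel, pv_zero, pv_add_one σ (Nat.zero_lt_succ m),
    pv_of_lt σ (Nat.lt_succ_self (m + 1)), zero_le, if_true]
  rw [sum_congr rfl fun k hk => if_congr (hstrict k hk) rfl rfl]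
  simp

end PairCount

/-- Insert the new largest value `n + 1` into `τ` at zero-based position `s`. -/
def insertMax (τ : Perm (Fin n)) (s : Fin (n + 1)) : Perm (Fin (n + 1)) :=
  (finSuccEquiv' s).trans (τ.optionCongr.trans (finSuccEquiv' (Fin.last n)).symm)

section Insertion

variable (τ : Perm (Fin n)) (s : Fin (n + 1))

lemma insertMax_apply_self : insertMax τ s s = Fin.last n := by
  simp [insertMax]

lemma insertMax_apply_succAbove (j : Fin n) :
    insertMax τ s (s.succAbove j) = (τ j).castSucc := by
  simp [insertMax]

lemma insertMax_bijective :
    Function.Bijective fun p : Perm (Fin n) × Fin (n + 1) => insertMax p.1 p.2 := by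
  rw [Fintype.bijective_iff_injective_and_card]
  refine ⟨?_, by simp [Fintype.card_perm, Nat.factorial_succ, mul_comm]⟩
  rintro ⟨τ, s⟩ ⟨τ', s'⟩ h
  dsimp only at h
  have position (τ : Perm (Fin n)) (s) : (insertMax τ s).symm (Fin.last n) = s :=
    (Equiv.symm_apply_eq _).mpr (insertMax_apply_self τ s).symm
  obtain rfl : s = s' := by rw [← position τ s, ← position τ' s', h]
  obtain rfl : τ = τ' := Equiv.ext fun j => Fin.castSucc_injective n <| by
    rw [← insertMax_apply_succAbove, ← insertMax_apply_succAbove, h]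
  rfl

lemma pv_insertMax_of_le {k : ℕ} (hk : k ≤ s) : pv (insertMax τ s) k = pv τ k := by
  obtain _ | i := k
  · simp
  have hi : i < n := by omega
  have hpos : (⟨i, by omega⟩ : Fin (n + 1)) = s.succAbove ⟨i, hi⟩ :=
    (Fin.succAbove_of_castSucc_lt s ⟨i, hi⟩ (by simp [Fin.lt_def]; omega)).symm
  rw [pv_add_one _ (by omega), pv_add_one τ hi, hpos, insertMax_apply_succAbove, Fin.val_castSucc]

lemma pv_insertMax_succ_self : pv (insertMax τ s) (s + 1) = n + 1 := by
  simp [pv_add_one _ s.is_lt, insertMax_apply_self]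

lemma pv_insertMax_succ_of_lt {k : ℕ} (hk : s < k) : pv (insertMax τ s) (k + 1) = pv τ k := by
  by_cases hkn : k ≤ n
  · obtain ⟨i, rfl⟩ : ∃ i, k = i + 1 := ⟨k - 1, by omega⟩
    have hpos : (⟨i + 1, by omega⟩ : Fin (n + 1)) = s.succAbove ⟨i, by omega⟩ :=
      (Fin.succAbove_of_le_castSucc s ⟨i, by omega⟩ (by simp [Fin.le_def]; omega)).symm
    rw [pv_add_one _ (by omega), pv_add_one τ (by omega), hpos, insertMax_apply_succAbove,
      Fin.val_castSucc]
  · rw [pv_of_lt _ (by omega), pv_of_lt _ (by omega)]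

end Insertion

/-- Inserting one entry into a sequence at position `s` replaces the term `f s` by two terms. -/
lemma sum_range_add_two_add_of_insert {M : Type*} [AddCommMonoid M] {f g : ℕ → M} {s : ℕ}
    (hs : s ≤ n) (hlt : ∀ k < s, g k = f k) (hgt : ∀ k, s < k → g (k + 1) = f k) :
    ∑ k ∈ range (n + 2), g k + f s = ∑ k ∈ range (n + 1), f k + g s + g (s + 1) := by
  obtain ⟨m, rfl⟩ := Nat.exists_eq_add_of_le hs
  have hleft : ∑ k ∈ range s, g k = ∑ k ∈ range s, f k :=
    sum_congr rfl fun k hk => hlt k (mem_range.mp hk)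
  have hright : ∑ k ∈ range m, g (s + 2 + k) = ∑ k ∈ range m, f (s + 1 + k) :=
    sum_congr rfl fun k _ => by rw [show s + 2 + k = s + 1 + k + 1 by omega]; exact hgt _ (by omega)
  rw [show s + m + 2 = s + 2 + m by omega, show s + m + 1 = s + 1 + m by omega,
    sum_range_add g (s + 2), sum_range_add f (s + 1), sum_range_succ g (s + 1),
    sum_range_succ g s, sum_range_succ f s, hleft, hright]
  abel

lemma pairCount_insertMax (r : ℕ → ℕ → Prop) [DecidableRel r] (τ : Perm (Fin n))
    (s : Fin (n + 1)) :
    pairCount r (insertMax τ s) + (if r (pv τ s) (pv τ (s + 1)) then 1 else 0) =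
      pairCount r τ + (if r (pv τ s) (n + 1) then 1 else 0) +
        (if r (n + 1) (pv τ (s + 1)) then 1 else 0) := by
  simp only [pairCount, card_filter]
  have hs : (s : ℕ) ≤ n := Nat.lt_succ_iff.mp s.is_lt
  refine (sum_range_add_two_add_of_insert (M := ℕ)
    (f := fun k => if r (pv τ k) (pv τ (k + 1)) then 1 else 0)
    (g := fun k => if r (pv (insertMax τ s) k) (pv (insertMax τ s) (k + 1)) then 1 else 0) hs
    (fun k hk => ?_) (fun k hk => ?_)).trans ?_
  · simp only [pv_insertMax_of_le τ s hk.le, pv_insertMax_of_le τ s hk]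
  · simp only [pv_insertMax_succ_of_lt τ s hk,
      pv_insertMax_succ_of_lt τ s (Nat.lt_succ_of_lt hk)]
  · simp only [pv_insertMax_of_le τ s le_rfl, pv_insertMax_succ_self,
      pv_insertMax_succ_of_lt τ s (Nat.lt_succ_self _)]

noncomputable def xyz (j d l : ℕ) : MvPolynomial (Fin 4) ℤ := X 1 ^ j * X 2 ^ d * X 3 ^ l

noncomputable def weight (σ : Perm (Fin n)) : MvPolynomial (Fin 4) ℤ :=
  xyz (jump σ) (des σ) (lsuc σ)

noncomputable def xyzDeriv (j d l : ℕ) : MvPolynomial (Fin 4) ℤ :=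
  j • xyz j (d + 1) l + d • xyz (j + 1) d l + l • xyz (j + 1) (d + 1) (l - 1)

-- Every position contributes according to the type of the pair it splits, except the one right
-- after the value `n`: it splits a weak descent but contributes `z` times the weight of `τ`.
lemma weight_insertMax_add (τ : Perm (Fin n)) (s : Fin (n + 1)) :
    weight (insertMax τ s) + (if pv τ s = n then xyz (jump τ + 1) (des τ) (lsuc τ) else 0) =
      (if pv τ s = n then X 3 * weight τ else 0) +
      (if pv τ s + 2 ≤ pv τ (s + 1) then xyz (jump τ) (des τ + 1) (lsuc τ) else 0) +
      (if pv τ s + 1 = pv τ (s + 1) then xyz (jump τ + 1) (des τ + 1) (lsuc τ - 1) else 0) +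
      (if pv τ (s + 1) ≤ pv τ s then xyz (jump τ + 1) (des τ) (lsuc τ) else 0) := by
  have hj := pairCount_insertMax (fun a b => a + 2 ≤ b) τ s
  have hl := pairCount_insertMax (fun a b => a + 1 = b) τ s
  have hd := pairCount_insertMax (fun a b => b ≤ a) τ s
  simp only [pairCount_jump, pairCount_lsuc, pairCount_weakDescent] at hj hl hd
  have ha := pv_le τ s
  have hb := pv_le τ (s + 1)
  simp only [weight, xyz]
  obtain hJ | hS | hW : pv τ s + 2 ≤ pv τ (s + 1) ∨ pv τ s + 1 = pv τ (s + 1) ∨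
      pv τ (s + 1) ≤ pv τ s := by omega
  · obtain ⟨h1, h2, h3⟩ : jump (insertMax τ s) = jump τ ∧ des (insertMax τ s) = des τ + 1 ∧
        lsuc (insertMax τ s) = lsuc τ := by split_ifs at hj hl hd <;> omega
    rw [h1, h2, h3]
    split_ifs <;> first | omega | ring
  · obtain ⟨h1, h2, h3⟩ : jump (insertMax τ s) = jump τ + 1 ∧ des (insertMax τ s) = des τ + 1 ∧
        lsuc (insertMax τ s) = lsuc τ - 1 := by split_ifs at hj hl hd <;> omega
    rw [h1, h2, h3]
    split_ifs <;> first | omega | ring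
  by_cases hA : pv τ s = n
  · obtain ⟨h1, h2, h3⟩ : jump (insertMax τ s) = jump τ ∧ des (insertMax τ s) = des τ ∧
        lsuc (insertMax τ s) = lsuc τ + 1 := by split_ifs at hj hl hd <;> omega
    rw [h1, h2, h3]
    split_ifs <;> first | omega | ring
  · obtain ⟨h1, h2, h3⟩ : jump (insertMax τ s) = jump τ + 1 ∧ des (insertMax τ s) = des τ ∧
        lsuc (insertMax τ s) = lsuc τ := by split_ifs at hj hl hd <;> omega
    rw [h1, h2, h3]
    split_ifs <;> first | omega | ring

lemma sum_fin_ite_eq_card_smul {M : Type*} [AddCommMonoid M] (p : ℕ → Prop) [DecidablePred p]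
    (c : M) (m : ℕ) : ∑ s : Fin m, (if p s then c else 0) = #{k ∈ range m | p k} • c := by
  rw [Fin.sum_univ_eq_sum_range (fun k => if p k then c else 0), ← sum_filter, sum_const]

lemma sum_fin_ite_eq_pairCount_smul {M : Type*} [AddCommMonoid M] (r : ℕ → ℕ → Prop)
    [DecidableRel r] (τ : Perm (Fin n)) (c : M) :
    ∑ s : Fin (n + 1), (if r (pv τ s) (pv τ (s + 1)) then c else 0) = pairCount r τ • c :=
  sum_fin_ite_eq_card_smul (fun k => r (pv τ k) (pv τ (k + 1))) c (n + 1)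

lemma sum_weight_insertMax (τ : Perm (Fin n)) :
    ∑ s, weight (insertMax τ s) = X 3 * weight τ + xyzDeriv (jump τ) (des τ) (lsuc τ) := by
  have hsum := sum_congr rfl fun s (_ : s ∈ univ) => weight_insertMax_add τ s
  simp only [sum_add_distrib] at hsum
  rw [sum_fin_ite_eq_card_smul (fun k => pv τ k = n),
    sum_fin_ite_eq_card_smul (fun k => pv τ k = n), card_pv_eq_top, sum_fin_ite_eq_pairCount_smul (fun a b => a + 2 ≤ b),
    sum_fin_ite_eq_pairCount_smul (fun a b => a + 1 = b),
    sum_fin_ite_eq_pairCount_smul (fun a b => b ≤ a), pairCount_jump, pairCount_lsuc,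
    pairCount_weakDescent] at hsum
  rw [xyzDeriv]
  linear_combination hsum

lemma Lpoly_eq_sum_weight (n : ℕ) : Lpoly n = ∑ σ : Perm (Fin n), weight σ := rfl

lemma Lpoly_zero : Lpoly 0 = 1 := by
  simp [Lpoly_eq_sum_weight, weight, xyz, jump, des, lsuc]

lemma Lpoly_succ (n : ℕ) :
    Lpoly (n + 1) = ∑ τ : Perm (Fin n), (X 3 * weight τ + xyzDeriv (jump τ) (des τ) (lsuc τ)) := by
  rw [Lpoly_eq_sum_weight, ← Fintype.sum_bijective _ insertMax_bijective _ _ fun _ => rfl,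
    Fintype.sum_prod_type]
  exact sum_congr rfl fun τ _ => sum_weight_insertMax τ

lemma Derivation.map_xyz (D : Derivation ℤ (MvPolynomial (Fin 4) ℤ) (MvPolynomial (Fin 4) ℤ))
    (hx : D (X 1) = X 1 * X 2) (hy : D (X 2) = X 1 * X 2) (hz : D (X 3) = X 1 * X 2)
    (j d l : ℕ) : D (xyz j d l) = xyzDeriv j d l := by
  simp only [xyz, xyzDeriv, Derivation.leibniz, Derivation.leibniz_pow, hx, hy, hz, smul_eq_mul,
    nsmul_eq_mul]
  rcases j with _ | j <;> rcases d with _ | d <;> rcases l with _ | l <;>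
    · push_cast [Nat.add_sub_cancel]
      ring

/-- Dumont's grammar also generates `L_n`: `Dⁿ(a) = a L_n(x,y,z)`. -/
theorem dumont_lsuc (D : Derivation ℤ (MvPolynomial (Fin 4) ℤ) (MvPolynomial (Fin 4) ℤ))
    (ha : D (X 0) = X 0 * X 3) (hx : D (X 1) = X 1 * X 2)
    (hy : D (X 2) = X 1 * X 2) (hz : D (X 3) = X 1 * X 2) (n : ℕ) :
    (⇑D)^[n] (X 0) = X 0 * Lpoly n := by
  induction n with
  | zero => simp [Lpoly_zero]
  | succ n ih =>
    rw [Function.iterate_succ_apply', ih, Derivation.leibniz, ha, Lpoly_succ, sum_add_distrib,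
      ← mul_sum, Lpoly_eq_sum_weight, map_sum]
    simp only [weight, D.map_xyz hx hy hz, smul_eq_mul]
    ring
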